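/- The node values x(b, d) of a rectified wire network, for fixed input d, are convex functions of the full vector of bias parameters b. -/

import Mathlib

/-- A rectified wire network: a finite DAG (edges go from lower to higher index)
with a positive weight on every node. -/
structure RWNet where
  n : ℕ
  edge : Fin n → Fin n → Bool
  edge_lt : ∀ i j, edge i j = true → i < j
  weight : Fin n → ℝ
  weight_pos : ∀ j, 0 < weight j

namespace RWNet

/-- Input nodes: in-degree zero. -/
def isInput (net : RWNet) (j : Fin net.n) : Prop := ∀ i, net.edge i j = false

/-- Output nodes: out-degree zero. -/
def isOutput (net : RWNet) (i : Fin net.n) : Prop := ∀ j, net.edge i j = false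

/-- Node values: input nodes carry the data `d`; any other node `j` has value
`w_j * Σ_{i→j} max(0, x_i − b_{i→j})`. -/
def value (net : RWNet) (b : Fin net.n → Fin net.n → ℝ) (d : Fin net.n → ℝ) :
    Fin net.n → ℝ := fun j =>
  if (∀ i, net.edge i j = false) then d j
  else
    net.weight j *
      ∑ i ∈ (Finset.univ.filter fun i => net.edge i j = true).attach,
        max 0 (net.value b d i.1 - b i.1 j)
termination_by j => j.val
decreasing_by
  have h := i.2
  simp only [Finset.mem_filter, Finset.mem_univ, true_and] at h
  exact net.edge_lt _ _ h

/-- Reachability along directed edges. -/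
inductive Reaches (net : RWNet) : Fin net.n → Fin net.n → Prop
  | refl (i : Fin net.n) : Reaches net i i
  | step {i j k : Fin net.n} : net.edge i j = true → Reaches net j k → Reaches net i k

end RWNet

theorem ConvexOn.finset_sum {𝕜 E β ι : Type*} [Semiring 𝕜] [PartialOrder 𝕜]
    [AddCommMonoid E] [AddCommMonoid β] [PartialOrder β] [IsOrderedAddMonoid β]
    [SMul 𝕜 E] [Module 𝕜 β]
    {s : Set E} (hs : Convex 𝕜 s) (t : Finset ι) {f : ι → E → β}
    (hf : ∀ i ∈ t, ConvexOn 𝕜 s (f i)) : ConvexOn 𝕜 s fun x => ∑ i ∈ t, f i x := by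
  simpa only [← Finset.sum_apply] using
    Finset.sum_induction f (ConvexOn 𝕜 s) (fun _ _ => ConvexOn.add) (convexOn_const 0 hs) hf

namespace RWNet

variable (net : RWNet) {b : Fin net.n → Fin net.n → ℝ} (d : Fin net.n → ℝ) {j : Fin net.n}

lemma value_of_isInput (hj : net.isInput j) : net.value b d j = d j := by
  unfold isInput at hj
  rw [value, if_pos hj]

lemma value_of_not_isInput (hj : ¬ net.isInput j) :
    net.value b d j =
      net.weight j * ∑ i with net.edge i j = true, max 0 (net.value b d i - b i j) := by
  unfold isInput at hj
  rw [value, if_neg hj, Finset.sum_attach _ fun i => max 0 (net.value b d i - b i j)]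

lemma convexOn_value_of_parents
    (hparents : ∀ i, net.edge i j = true → ConvexOn ℝ Set.univ fun b => net.value b d i) :
    ConvexOn ℝ Set.univ fun b => net.value b d j := by
  by_cases hj : net.isInput j
  · simp_rw [net.value_of_isInput d hj]
    exact convexOn_const _ convex_univ
  simp_rw [net.value_of_not_isInput d hj]
  refine .smul (net.weight_pos j).le (.finset_sum convex_univ _ fun i hi => ?_)
  let bias : (Fin net.n → Fin net.n → ℝ) →ₗ[ℝ] ℝ := LinearMap.proj j ∘ₗ LinearMap.proj i
  have hbias : ConcaveOn ℝ Set.univ bias := bias.concaveOn convex_univ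
  exact (convexOn_const 0 convex_univ).sup
    ((hparents i (Finset.mem_filter.mp hi).2).sub hbias)

end RWNet

/-- Theorem 5: for fixed input `d`, every node value of a rectified wire network
is a convex function of the full vector of bias parameters. -/
theorem value_convexOn_biases (net : RWNet) (d : Fin net.n → ℝ) (j : Fin net.n) :
    ConvexOn ℝ Set.univ (fun b : Fin net.n → Fin net.n → ℝ => net.value b d j) :=
  net.convexOn_value_of_parents d fun i _ => value_convexOn_biases net d i
termination_by j.val
decreasing_by exact net.edge_lt i j ‹_›
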